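/- arXiv:1403.6188 — 5 statements merged into one kernel-verified Lean document; each statement's English description precedes it below -/
import Mathlib

section
/- Let G be a finite connected simple graph on vertex set V with nonnegative edge weights and let T be a spanning tree of G rooted at r. Suppose X with ∅ ≠ X ⊊ V attains the minimum cut, i.e., cut(X) = λ(G), and suppose the minimum cut 1-respects T, meaning exactly one edge of T has exactly one endpoint in X. Then λ(G) = min_{v ∈ V, v ≠ r} cut(v↓). -/
open Finset
open scoped Classical

noncomputable section

variable {V : Type*} [Fintype V] [DecidableEq V]

/-- `Desc T r v u` : `u` is a descendant of `v` in the tree `T` rooted at `r`,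
i.e. `v` lies on the unique path in `T` from `r` to `u` (includes `u = v`). -/
def Desc (T : SimpleGraph V) (r v u : V) : Prop :=
  ∀ p : T.Walk r u, p.IsPath → v ∈ p.support

/-- `descSet T r v` is `v↓`, the set of descendants of `v` in `T` rooted at `r`. -/
def descSet (T : SimpleGraph V) (r v : V) : Set V := {u | Desc T r v u}

/-- `IsLCA T r z x y` : `z` is the least common ancestor of `x` and `y` in `T`
rooted at `r`: `z` is a common ancestor of maximal depth (distance from `r`). -/
def IsLCA (T : SimpleGraph V) (r z x y : V) : Prop :=
  Desc T r z x ∧ Desc T r z y ∧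
    ∀ u, Desc T r u x → Desc T r u y → T.dist r u ≤ T.dist r z

/-- `cutw G w S` : total weight of edges of `G` with exactly one endpoint in `S`
(each such edge `{x,y}` with `x ∈ S`, `y ∉ S` is counted once, as the ordered
pair `(x, y)`). -/
def cutw (G : SimpleGraph V) (w : V → V → ℝ) (S : Set V) : ℝ :=
  ∑ x, ∑ y, if x ∈ S ∧ y ∉ S ∧ G.Adj x y then w x y else 0

/-- `degw G w v` : the weighted degree `δ(v)` of `v` in `G`. -/
def degw (G : SimpleGraph V) (w : V → V → ℝ) (v : V) : ℝ :=
  ∑ u, if G.Adj u v then w u v else 0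

/-- `rhoLCA G T w r v` : `ρ(v)`, the total weight of edges of `G` whose
endpoints' least common ancestor in `T` (rooted at `r`) is `v`.  Each edge is
counted as two ordered pairs, whence the division by `2`. -/
def rhoLCA (G T : SimpleGraph V) (w : V → V → ℝ) (r v : V) : ℝ :=
  (∑ x, ∑ y, if G.Adj x y ∧ IsLCA T r v x y then w x y else 0) / 2

/-- `degDown G T w r v` : `δ↓(v) = Σ_{u ∈ v↓} δ(u)`. -/
def degDown (G T : SimpleGraph V) (w : V → V → ℝ) (r v : V) : ℝ :=
  ∑ u, if Desc T r v u then degw G w u else 0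

/-- `rhoDown G T w r v` : `ρ↓(v) = Σ_{u ∈ v↓} ρ(u)`. -/
def rhoDown (G T : SimpleGraph V) (w : V → V → ℝ) (r v : V) : ℝ :=
  ∑ u, if Desc T r v u then rhoLCA G T w r u else 0

/-- If every edge of `T` crossing `X` (inside → outside) is the pair `(a, b)`,
then any walk from outside `X` into `X` passes through both `a` and `b`. -/
lemma cross_aux (T : SimpleGraph V) (X : Set V) (a b : V)
    (huniq : ∀ x y : V, T.Adj x y → x ∈ X → y ∉ X → x = a ∧ y = b) :
    ∀ {x y : V} (p : T.Walk x y), x ∉ X → y ∈ X →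
      a ∈ p.support ∧ b ∈ p.support := by
  intro x y p
  induction p with
  | nil => intro hx hy; exact absurd hy hx
  | @cons u v z h p ih =>
    intro hx hy
    by_cases hv : v ∈ X
    · obtain ⟨ha, hb⟩ := huniq v u h.symm hv hx
      constructor
      · exact List.mem_cons_of_mem _ (ha ▸ p.start_mem_support)
      · simp [SimpleGraph.Walk.support_cons, hb]
    · obtain ⟨ha, hb⟩ := ih hv hy
      exact ⟨List.mem_cons_of_mem _ ha, List.mem_cons_of_mem _ hb⟩

/-- If the unique crossing tree edge of `X` is `(a, b)` with `a ∈ X`, `b ∉ X`,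
and the root `r` is outside `X`, then `X` is exactly the descendant set of `a`. -/
lemma component_eq (T : SimpleGraph V) (hT : T.IsTree) (X : Set V) (a b : V)
    (haX : a ∈ X) (hbX : b ∉ X)
    (huniq : ∀ x y : V, T.Adj x y → x ∈ X → y ∉ X → x = a ∧ y = b)
    (r : V) (hr : r ∉ X) : X = descSet T r a := by
  ext u
  constructor
  · intro hu p hp
    exact (cross_aux T X a b huniq p hr hu).1
  · intro hu
    by_contra huX
    obtain ⟨wlk⟩ := hT.isConnected.preconnected r u
    obtain ⟨p, hp⟩ := wlk.toPath
    have ha : a ∈ p.support := hu p hp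
    set q := p.takeUntil a ha with hq
    set q' := p.dropUntil a ha with hq'
    have hb1 : b ∈ q.support := (cross_aux T X a b huniq q hr haX).2
    have hb2 : b ∈ q'.support := by
      have := (cross_aux T X a b huniq q'.reverse huX haX).2
      rw [SimpleGraph.Walk.support_reverse, List.mem_reverse] at this
      exact this
    have hba : b ≠ a := fun h => hbX (h ▸ haX)
    have hb2' : b ∈ q'.support.tail := by
      rcases List.mem_cons.mp ((SimpleGraph.Walk.support_eq_cons q') ▸ hb2) with h | h
      · exact absurd h hba
      · exact h
    have hnodup : p.support.Nodup := hp.support_nodup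
    rw [← p.take_spec ha, SimpleGraph.Walk.support_append] at hnodup
    exact (List.disjoint_of_nodup_append hnodup) hb1 hb2'

/-- The cut weight of the complement equals the cut weight. -/
lemma cutw_compl (G : SimpleGraph V) (w : V → V → ℝ)
    (hsym : ∀ x y, w x y = w y x) (X : Set V) :
    cutw G w Xᶜ = cutw G w X := by
  unfold cutw
  rw [Finset.sum_comm]
  refine Finset.sum_congr rfl fun x _ => Finset.sum_congr rfl fun y _ => ?_
  have hiff : (y ∈ Xᶜ ∧ x ∉ Xᶜ ∧ G.Adj y x) ↔ (x ∈ X ∧ y ∉ X ∧ G.Adj x y) := by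
    simp only [Set.mem_compl_iff, not_not, G.adj_comm]
    tauto
  rw [hsym y x]
  simp only [hiff]

/-- if `X` (nonempty, proper) attains the minimum cut of `G`
and the minimum cut 1-respects the spanning tree `T` rooted at `r` (exactly one
edge of `T` has exactly one endpoint in `X`, counted here as exactly one
ordered pair `(a, b)` with `T.Adj a b`, `a ∈ X`, `b ∉ X`), then
`λ(G) = min_{v ≠ r} cut(v↓)`. -/
theorem stmt5 (G T : SimpleGraph V) (hG : G.Connected)
    (hT : T.IsTree) (hTG : T ≤ G)
    (w : V → V → ℝ) (hsym : ∀ x y, w x y = w y x) (hnn : ∀ x y, 0 ≤ w x y)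
    (r : V) (X : Set V) (hXne : X ≠ ∅) (hXuniv : X ≠ Set.univ)
    (hmin : ∀ Y : Set V, Y ≠ ∅ → Y ≠ Set.univ → cutw G w X ≤ cutw G w Y)
    (hone : (Finset.univ.filter
      (fun q : V × V => T.Adj q.1 q.2 ∧ q.1 ∈ X ∧ q.2 ∉ X)).card = 1) :
    IsLeast ((fun v => cutw G w (descSet T r v)) '' {v | v ≠ r}) (cutw G w X) := by
  obtain ⟨q, hq⟩ := Finset.card_eq_one.mp hone
  have hqmem : q ∈ Finset.univ.filter
      (fun q : V × V => T.Adj q.1 q.2 ∧ q.1 ∈ X ∧ q.2 ∉ X) :=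
    hq ▸ Finset.mem_singleton_self q
  rw [Finset.mem_filter] at hqmem
  obtain ⟨-, hadj, haX, hbX⟩ := hqmem
  have huniq : ∀ x y : V, T.Adj x y → x ∈ X → y ∉ X → x = q.1 ∧ y = q.2 := by
    intro x y h1 h2 h3
    have hmem : (x, y) ∈ Finset.univ.filter
        (fun q : V × V => T.Adj q.1 q.2 ∧ q.1 ∈ X ∧ q.2 ∉ X) :=
      Finset.mem_filter.mpr ⟨Finset.mem_univ _, h1, h2, h3⟩
    rw [hq, Finset.mem_singleton] at hmem
    exact ⟨congrArg Prod.fst hmem, congrArg Prod.snd hmem⟩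
  have hlb : ∀ z ∈ (fun v => cutw G w (descSet T r v)) '' {v | v ≠ r},
      cutw G w X ≤ z := by
    rintro z ⟨v, hv, rfl⟩
    apply hmin
    · intro h
      have hvmem : v ∈ descSet T r v := fun p _ => p.end_mem_support
      rw [h] at hvmem
      exact hvmem
    · intro h
      have hrmem : r ∈ descSet T r v := h ▸ Set.mem_univ r
      have := hrmem SimpleGraph.Walk.nil SimpleGraph.Walk.IsPath.nil
      simp only [SimpleGraph.Walk.support_nil, List.mem_singleton] at this
      exact hv this
  by_cases hr : r ∈ X
  · have hX' : Xᶜ = descSet T r q.2 := by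
      refine component_eq T hT Xᶜ q.2 q.1 hbX (by simpa using haX) ?_ r (by simpa using hr)
      intro x y h1 h2 h3
      have := huniq y x h1.symm (by simpa using h3) (by simpa using h2)
      exact ⟨this.2, this.1⟩
    refine ⟨⟨q.2, fun hbr => hbX (hbr ▸ hr), ?_⟩, hlb⟩
    simp only
    rw [← hX', cutw_compl G w hsym X]
  · have hX : X = descSet T r q.1 := component_eq T hT X q.1 q.2 haX hbX huniq r hr
    refine ⟨⟨q.1, fun har => hr (har ▸ haX), ?_⟩, hlb⟩
    simp only
    rw [← hX]

end
end

section
/- Let T be a spanning tree of a finite connected simple graph rooted at r, and let the vertex set be partitioned into fragments F_1, …, F_k, each inducing a connected subgraph of T. Let v ∈ F_i and let j ≠ i be such that F_j ∩ v↓ ≠ ∅. Then F_j ⊆ v↓. Consequently, v↓ is the disjoint union of v↓ ∩ F_i and those fragments F_j (j ≠ i) entirely contained in v↓. -/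
open Finset
open scoped Classical

noncomputable section

variable {V : Type*} [Fintype V] [DecidableEq V]

/-- Crossing lemma: if an edge of `T` goes from inside `v↓` to outside,
the inside endpoint is `v` itself. -/
lemma cross_desc {T : SimpleGraph V} {r v x y : V}
    (hxy : T.Adj x y) (hx : Desc T r v x) (hy : ¬ Desc T r v y) : x = v := by
  simp only [Desc, not_forall] at hy
  obtain ⟨p, hp, hvp⟩ := hy
  by_cases hxs : x ∈ p.support
  · exact absurd (p.support_takeUntil_subset hxs
      (hx (p.takeUntil x hxs) (hp.takeUntil hxs))) hvp
  · have hq : ((SimpleGraph.Walk.cons hxy p.reverse).reverse).IsPath := by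
      rw [SimpleGraph.Walk.isPath_reverse_iff, SimpleGraph.Walk.cons_isPath_iff]
      exact ⟨hp.reverse, by simpa using hxs⟩
    have := hx _ hq
    simp only [SimpleGraph.Walk.support_reverse, SimpleGraph.Walk.support_cons,
      List.mem_reverse, List.mem_cons] at this
    rcases this with h | h
    · exact h.symm
    · exact absurd (by simpa using h) hvp

lemma frag_sub {T : SimpleGraph V} {r v : V} {S : Set V}
    (hS : (T.induce S).Connected) (hvS : v ∉ S)
    {a : V} (ha : a ∈ S) (hda : Desc T r v a) :
    S ⊆ descSet T r v := by
  intro b hb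
  obtain ⟨w⟩ := hS ⟨a, ha⟩ ⟨b, hb⟩
  have key : ∀ (x y : S) (w : (T.induce S).Walk x y),
      Desc T r v (x : V) → Desc T r v (y : V) := by
    intro x y w
    induction w with
    | nil => exact id
    | @cons c d e h w ih =>
        intro hx
        apply ih
        by_contra hy
        have h' : T.Adj (c : V) (d : V) := h
        exact hvS (cross_desc h' hx hy ▸ c.coe_prop)
  exact key _ _ w hda

/-- for a fragment decomposition of the spanning tree `T`
rooted at `r`, if `v ∈ F i` and the fragment `F j` (`j ≠ i`) meets `v↓`, then
`F j ⊆ v↓`; consequently `v↓` is the disjoint union of `v↓ ∩ F i` and the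
fragments `F j` (`j ≠ i`) entirely contained in `v↓`. -/
theorem stmt8 (G T : SimpleGraph V) (hG : G.Connected)
    (hT : T.IsTree) (hTG : T ≤ G)
    (r : V) (k : ℕ) (F : Fin k → Set V)
    (hne : ∀ i, (F i).Nonempty)
    (hdisj : ∀ i j, i ≠ j → Disjoint (F i) (F j))
    (hcover : (⋃ i, F i) = Set.univ)
    (hconn : ∀ i, (T.induce (F i)).Connected)
    (v : V) (i : Fin k) (hv : v ∈ F i) :
    (∀ j, j ≠ i → (F j ∩ descSet T r v).Nonempty → F j ⊆ descSet T r v) ∧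
    (descSet T r v =
      (descSet T r v ∩ F i) ∪ (⋃ j ∈ {j | j ≠ i ∧ F j ⊆ descSet T r v}, F j)) ∧
    Disjoint (descSet T r v ∩ F i)
      (⋃ j ∈ {j | j ≠ i ∧ F j ⊆ descSet T r v}, F j) := by
  have hvdesc : v ∈ descSet T r v := by
    intro p hp; exact p.end_mem_support
  have part1 : ∀ j, j ≠ i → (F j ∩ descSet T r v).Nonempty →
      F j ⊆ descSet T r v := by
    intro j hj ⟨a, haF, had⟩
    have hvF : v ∉ F j := fun h =>
      (hdisj j i hj).ne_of_mem h hv rfl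
    exact frag_sub (hconn j) hvF haF had
  refine ⟨part1, ?_, ?_⟩
  · apply Set.Subset.antisymm
    · intro u hu
      have : u ∈ ⋃ i, F i := hcover ▸ Set.mem_univ u
      obtain ⟨j, hj⟩ := Set.mem_iUnion.mp this
      by_cases hji : j = i
      · exact Or.inl ⟨hu, hji ▸ hj⟩
      · exact Or.inr (Set.mem_biUnion ⟨hji, part1 j hji ⟨u, hj, hu⟩⟩ hj)
    · rintro u (⟨hu, _⟩ | hu)
      · exact hu
      · obtain ⟨j, hj, huj⟩ := Set.mem_iUnion₂.mp hu
        exact hj.2 huj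
  · rw [Set.disjoint_left]
    rintro u ⟨_, hui⟩ hu
    obtain ⟨j, hj, huj⟩ := Set.mem_iUnion₂.mp hu
    exact (hdisj i j (Ne.symm hj.1)).ne_of_mem hui huj rfl


end
end

section
/- Let T be a spanning tree of a finite connected simple graph rooted at r, with its vertex set partitioned into k fragments F_1, …, F_k, each inducing a connected subgraph of T. Call a vertex v a merging node if v has two distinct children x and y in T such that x↓ contains some fragment entirely and y↓ contains some fragment entirely. Then the number of merging nodes is at most k − 1. -/
open Finset
open scoped Classical

noncomputable section

variable {V : Type*} [Fintype V] [DecidableEq V]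

/-- `v` is a merging node: it has two distinct children `x, y` in `T` (rooted
at `r`) such that both `x↓` and `y↓` entirely contain some fragment. -/
def IsMergingNode (T : SimpleGraph V) (r : V) {k : ℕ} (F : Fin k → Set V)
    (v : V) : Prop :=
  ∃ x y, x ≠ y ∧ T.Adj v x ∧ T.Adj v y ∧ Desc T r v x ∧ Desc T r v y ∧
    (∃ j, F j ⊆ descSet T r x) ∧ (∃ j, F j ⊆ descSet T r y)

/-!
Call `v` a fragment ancestor if `v↓` contains a whole fragment. Fragment ancestors are closed
under taking parents and contain the root, so they form a rooted subtree `A`, and a merging node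
is exactly a vertex with at least two children in `A`. Counting edges of `A` shows that `A` has
more leaves than branching vertices. A leaf `v` of `A` lies in a fragment contained in `v↓`:
otherwise that fragment, being connected and avoiding `v`, would lie below a single child of `v`.
So each leaf is the top vertex of some fragment, and there are at most `k` leaves.
-/

theorem Finset.card_filter_one_lt_card_fiber_lt {α : Type*} [DecidableEq α] {A : Finset α}
    {r : α} (hr : r ∈ A) {f : α → α} (hf : Set.MapsTo f ↑(A.erase r) ↑A) :
    #{v ∈ A | 1 < #{x ∈ A.erase r | f x = v}} <
      #{v ∈ A | #{x ∈ A.erase r | f x = v} = 0} := by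
  set c : α → ℕ := fun v => #{x ∈ A.erase r | f x = v}
  change #{v ∈ A | 1 < c v} < #{v ∈ A | c v = 0}
  have hsum : #A - 1 = ∑ v ∈ A, c v := by
    rw [← card_erase_of_mem hr]
    exact card_eq_sum_card_fiberwise hf
  have hle : ∀ v ∈ A, (if 1 < c v then 1 else 0) + (if c v ≠ 0 then 1 else 0) ≤ c v := by
    intro v _
    split_ifs <;> omega
  have hcount := sum_le_sum hle
  rw [sum_add_distrib, ← card_filter, ← card_filter, ← hsum] at hcount
  have hsplit := card_filter_add_card_filter_not (s := A) (fun v => c v ≠ 0)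
  simp only [not_not] at hsplit
  have hA : 0 < #A := card_pos.2 ⟨r, hr⟩
  omega

namespace SimpleGraph.IsTree

variable {W : Type*} {T : SimpleGraph W} {r u v x : W}

def rootPath (hT : T.IsTree) (r u : W) : T.Walk r u :=
  (hT.existsUnique_path r u).choose

lemma isPath_rootPath (hT : T.IsTree) (r u : W) : (hT.rootPath r u).IsPath :=
  (hT.existsUnique_path r u).choose_spec.1

lemma eq_rootPath (hT : T.IsTree) {p : T.Walk r u} (hp : p.IsPath) : p = hT.rootPath r u :=
  (hT.existsUnique_path r u).choose_spec.2 p hp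

lemma takeUntil_rootPath (hT : T.IsTree) (h : v ∈ (hT.rootPath r u).support) :
    (hT.rootPath r u).takeUntil v h = hT.rootPath r v :=
  hT.eq_rootPath ((hT.isPath_rootPath r u).takeUntil h)

-- junk value: `hT.parent r r = r`
def parent (hT : T.IsTree) (r x : W) : W :=
  (hT.rootPath r x).penultimate

lemma parent_adj (hT : T.IsTree) (hx : x ≠ r) : T.Adj (hT.parent r x) x :=
  Walk.adj_penultimate (Walk.not_nil_of_ne hx.symm)

lemma rootPath_eq_concat (hT : T.IsTree) (hx : x ≠ r) :
    hT.rootPath r x = (hT.rootPath r (hT.parent r x)).concat (hT.parent_adj hx) := by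
  conv_lhs => rw [← Walk.concat_dropLast (hT.parent_adj hx)]
  rw [hT.eq_rootPath (hT.isPath_rootPath r x).dropLast]
  rfl

lemma length_rootPath_parent (hT : T.IsTree) (hx : x ≠ r) :
    (hT.rootPath r (hT.parent r x)).length + 1 = (hT.rootPath r x).length := by
  rw [hT.rootPath_eq_concat hx, Walk.length_concat]

lemma desc_iff (hT : T.IsTree) : Desc T r v u ↔ v ∈ (hT.rootPath r u).support :=
  ⟨fun h => h _ (hT.isPath_rootPath r u), fun h _ hp => hT.eq_rootPath hp ▸ h⟩

lemma desc_refl (hT : T.IsTree) (u : W) : Desc T r u u :=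
  hT.desc_iff.2 (Walk.end_mem_support _)

lemma desc_root (hT : T.IsTree) (u : W) : Desc T r r u :=
  hT.desc_iff.2 (Walk.start_mem_support _)

lemma desc_trans (hT : T.IsTree) {w : W} (hvw : Desc T r v w) (hwu : Desc T r w u) :
    Desc T r v u := by
  rw [desc_iff hT] at hvw hwu ⊢
  rw [← hT.takeUntil_rootPath hwu] at hvw
  exact Walk.support_takeUntil_subset_support _ hwu hvw

lemma length_rootPath_lt (hT : T.IsTree) (h : Desc T r v u) (hne : v ≠ u) :
    (hT.rootPath r v).length < (hT.rootPath r u).length := by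
  rw [desc_iff hT] at h
  rw [← hT.takeUntil_rootPath h]
  exact Walk.length_takeUntil_lt_length h hne

lemma desc_antisymm (hT : T.IsTree) (huv : Desc T r u v) (hvu : Desc T r v u) : u = v := by
  by_contra hne
  have := hT.length_rootPath_lt huv hne
  have := hT.length_rootPath_lt hvu (Ne.symm hne)
  omega

lemma ne_root_of_desc (hT : T.IsTree) (h : Desc T r v u) (hne : v ≠ u) : u ≠ r := by
  rintro rfl
  exact hne (hT.desc_antisymm h (hT.desc_root v))

lemma desc_or_desc_of_adj (hT : T.IsTree) (hadj : T.Adj u v) :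
    Desc T r u v ∨ Desc T r v u := by
  rw [desc_iff hT, desc_iff hT, or_iff_not_imp_left]
  exact hT.isAcyclic.mem_support_of_ne_mem_support_of_adj_of_isPath
    (hT.isPath_rootPath r u) (hT.isPath_rootPath r v) hadj

lemma desc_iff_eq_or_desc_parent (hT : T.IsTree) (hx : x ≠ r) :
    Desc T r v x ↔ v = x ∨ Desc T r v (hT.parent r x) := by
  rw [desc_iff hT, desc_iff hT, hT.rootPath_eq_concat hx, Walk.support_concat]
  simp [or_comm]

lemma parent_desc (hT : T.IsTree) (hx : x ≠ r) : Desc T r (hT.parent r x) x :=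
  (hT.desc_iff_eq_or_desc_parent hx).2 (Or.inr (hT.desc_refl _))

lemma parent_eq_of_adj_of_desc (hT : T.IsTree) (hadj : T.Adj v x) (h : Desc T r v x) :
    hT.parent r x = v := by
  rw [parent, hT.isAcyclic.path_concat (hT.isPath_rootPath r v) (hT.isPath_rootPath r x) hadj
    (hT.desc_iff.1 h), Walk.penultimate_concat]

lemma exists_child_desc (hT : T.IsTree) (h : Desc T r v u) (hne : v ≠ u) :
    ∃ x, x ≠ r ∧ hT.parent r x = v ∧ Desc T r x u := by
  obtain ⟨n, hn⟩ : ∃ n, (hT.rootPath r u).length = n := ⟨_, rfl⟩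
  induction n generalizing u with
  | zero => have := hT.length_rootPath_parent (hT.ne_root_of_desc h hne); omega
  | succ n ih =>
    have hu := hT.ne_root_of_desc h hne
    have hvp := ((hT.desc_iff_eq_or_desc_parent hu).1 h).resolve_left hne
    by_cases hpv : hT.parent r u = v
    · exact ⟨u, hu, hpv, hT.desc_refl u⟩
    have hlen := hT.length_rootPath_parent hu
    obtain ⟨x, hxr, hxv, hxp⟩ := ih hvp (Ne.symm hpv) (by omega)
    exact ⟨x, hxr, hxv, hT.desc_trans hxp (hT.parent_desc hu)⟩

lemma desc_of_adj_of_desc (hT : T.IsTree) {a b : W} (hxa : Desc T r x a) (hab : T.Adj a b)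
    (hb : b ≠ hT.parent r x) : Desc T r x b := by
  rcases hT.desc_or_desc_of_adj hab with hab' | hba
  · exact hT.desc_trans hxa hab'
  have ha := hT.ne_root_of_desc hba hab.ne.symm
  have hpa := hT.parent_eq_of_adj_of_desc hab.symm hba
  rcases (hT.desc_iff_eq_or_desc_parent ha).1 hxa with rfl | hxp
  · exact absurd hpa.symm hb
  · rwa [hpa] at hxp

lemma subset_descSet_of_preconnected (hT : T.IsTree) {s : Set W}
    (hs : (T.induce s).Preconnected) (hu : u ∈ s) (hxu : Desc T r x u)
    (hx : hT.parent r x ∉ s) : s ⊆ descSet T r x := by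
  suffices ∀ {a b : s} (p : (T.induce s).Walk a b), Desc T r x a → Desc T r x b by
    intro w hw
    obtain ⟨p⟩ := hs ⟨u, hu⟩ ⟨w, hw⟩
    exact this p hxu
  intro a b p
  induction p with
  | nil => exact id
  | cons hadj _ ih =>
    exact fun h => ih (hT.desc_of_adj_of_desc h hadj fun he => hx (he ▸ Subtype.prop _))

lemma exists_child_subset_descSet (hT : T.IsTree) {s : Set W}
    (hs : (T.induce s).Preconnected) (hne : s.Nonempty) (hsv : s ⊆ descSet T r v)
    (hv : v ∉ s) : ∃ x, x ≠ r ∧ hT.parent r x = v ∧ s ⊆ descSet T r x := by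
  obtain ⟨u, hu⟩ := hne
  obtain ⟨x, hxr, hxv, hxu⟩ := hT.exists_child_desc (hsv hu) fun h => hv (h ▸ hu)
  exact ⟨x, hxr, hxv, hT.subset_descSet_of_preconnected hs hu hxu (hxv ▸ hv)⟩

end SimpleGraph.IsTree

section Fragments

variable {W : Type*} [Fintype W] {T : SimpleGraph W} {r v : W} {k : ℕ} {F : Fin k → Set W}

def fragmentAncestors (T : SimpleGraph W) (r : W) (F : Fin k → Set W) : Finset W :=
  {v | ∃ j, F j ⊆ descSet T r v}

lemma mem_fragmentAncestors : v ∈ fragmentAncestors T r F ↔ ∃ j, F j ⊆ descSet T r v := by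
  simp [fragmentAncestors]

def fragmentChildren [DecidableEq W] (hT : T.IsTree) (r : W) (F : Fin k → Set W) (v : W) :
    Finset W :=
  {x ∈ (fragmentAncestors T r F).erase r | hT.parent r x = v}

lemma root_mem_fragmentAncestors (hT : T.IsTree) (j : Fin k) : r ∈ fragmentAncestors T r F :=
  mem_fragmentAncestors.2 ⟨j, fun u _ => hT.desc_root u⟩

lemma mapsTo_parent_fragmentAncestors [DecidableEq W] (hT : T.IsTree) :
    Set.MapsTo (hT.parent r) ↑((fragmentAncestors T r F).erase r)
      ↑(fragmentAncestors T r F) := by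
  intro x hx
  obtain ⟨hxr, hx⟩ := mem_erase.1 hx
  obtain ⟨j, hj⟩ := mem_fragmentAncestors.1 hx
  exact mem_fragmentAncestors.2 ⟨j, fun u hu => hT.desc_trans (hT.parent_desc hxr) (hj hu)⟩

lemma IsMergingNode.mem_fragmentAncestors (hT : T.IsTree) (hv : IsMergingNode T r F v) :
    v ∈ fragmentAncestors T r F := by
  obtain ⟨x, -, -, -, -, hvx, -, ⟨j, hj⟩, -⟩ := hv
  exact _root_.mem_fragmentAncestors.2 ⟨j, fun u hu => hT.desc_trans hvx (hj hu)⟩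

lemma IsMergingNode.one_lt_card_fragmentChildren [DecidableEq W] (hT : T.IsTree)
    (hv : IsMergingNode T r F v) : 1 < #(fragmentChildren hT r F v) := by
  obtain ⟨x, y, hxy, hadjx, hadjy, hvx, hvy, hx, hy⟩ := hv
  have hchild : ∀ {x}, T.Adj v x → Desc T r v x → (∃ j, F j ⊆ descSet T r x) →
      x ∈ fragmentChildren hT r F v := fun hadj hd hF =>
    mem_filter.2 ⟨mem_erase.2 ⟨hT.ne_root_of_desc hd hadj.ne,
      _root_.mem_fragmentAncestors.2 hF⟩, hT.parent_eq_of_adj_of_desc hadj hd⟩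
  exact one_lt_card.2 ⟨x, hchild hadjx hvx hx, y, hchild hadjy hvy hy, hxy⟩

lemma card_childless_fragmentAncestors_le [DecidableEq W] (hT : T.IsTree)
    (hne : ∀ i, (F i).Nonempty) (hconn : ∀ i, (T.induce (F i)).Connected) :
    #{v ∈ fragmentAncestors T r F | #(fragmentChildren hT r F v) = 0} ≤ k := by
  have hleaf : ∀ v ∈ {v ∈ fragmentAncestors T r F | #(fragmentChildren hT r F v) = 0},
      ∃ j, j ∈ (univ : Finset (Fin k)) ∧ v ∈ F j ∧ F j ⊆ descSet T r v := by
    intro v hv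
    obtain ⟨hvA, hleaf⟩ := mem_filter.1 hv
    obtain ⟨j, hj⟩ := mem_fragmentAncestors.1 hvA
    refine ⟨j, mem_univ j, by_contra fun hvj => ?_, hj⟩
    obtain ⟨x, hxr, hxv, hx⟩ :=
      hT.exists_child_subset_descSet (hconn j).preconnected (hne j) hj hvj
    rw [card_eq_zero, fragmentChildren, filter_eq_empty_iff] at hleaf
    exact hleaf (mem_erase.2 ⟨hxr, mem_fragmentAncestors.2 ⟨j, hx⟩⟩) hxv
  have htop : ∀ j, ({v | v ∈ F j ∧ F j ⊆ descSet T r v} : Set W).Subsingleton :=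
    fun j v hv v' hv' => hT.desc_antisymm (hv.2 hv'.1 : Desc T r v v') (hv'.2 hv.1)
  simpa using card_le_card_of_forall_subsingleton _ hleaf fun j _ =>
    (htop j).anti fun _ hv => hv.2

end Fragments

theorem stmt9_general (T : SimpleGraph V)
    (hT : T.IsTree)
    (r : V) (k : ℕ) (F : Fin k → Set V)
    (hne : ∀ i, (F i).Nonempty)
    (hconn : ∀ i, (T.induce (F i)).Connected) :
    (Finset.univ.filter (fun v => IsMergingNode T r F v)).card ≤ k - 1 := by
  rcases Nat.eq_zero_or_pos k with rfl | hk
  · simp [IsMergingNode]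
  have hmerge : ({v | IsMergingNode T r F v} : Finset V) ⊆
      {v ∈ fragmentAncestors T r F | 1 < #(fragmentChildren hT r F v)} := fun v hv => by
    obtain ⟨-, hv⟩ := mem_filter.1 hv
    exact mem_filter.2 ⟨hv.mem_fragmentAncestors hT, hv.one_lt_card_fragmentChildren hT⟩
  refine Nat.le_sub_one_of_lt ?_
  calc #{v | IsMergingNode T r F v}
      ≤ #{v ∈ fragmentAncestors T r F | 1 < #(fragmentChildren hT r F v)} := card_le_card hmerge
    _ < #{v ∈ fragmentAncestors T r F | #(fragmentChildren hT r F v) = 0} :=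
      card_filter_one_lt_card_fiber_lt (root_mem_fragmentAncestors hT ⟨0, hk⟩)
        (mapsTo_parent_fragmentAncestors hT)
    _ ≤ k := card_childless_fragmentAncestors_le hT hne hconn

/-- for a fragment decomposition into `k` fragments of a
spanning tree `T` rooted at `r`, the number of merging nodes is at most `k − 1`. -/
theorem stmt9 (G T : SimpleGraph V) (hG : G.Connected)
    (hT : T.IsTree) (hTG : T ≤ G)
    (r : V) (k : ℕ) (F : Fin k → Set V)
    (hne : ∀ i, (F i).Nonempty)
    (hdisj : ∀ i j, i ≠ j → Disjoint (F i) (F j))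
    (hcover : (⋃ i, F i) = Set.univ)
    (hconn : ∀ i, (T.induce (F i)).Connected) :
    (Finset.univ.filter (fun v => IsMergingNode T r F v)).card ≤ k - 1 :=
  stmt9_general T hT r k F hne hconn

end
end

section
/- Let T be a spanning tree of a finite connected simple graph rooted at r, with its vertex set partitioned into fragments each inducing a connected subgraph of T. Let x ∈ F_i, y ∈ F_j with i ≠ j, and let z = LCA(x,y). If z ∉ F_i ∪ F_j, then z is a merging node: z has two distinct children a and b in T with F_i ⊆ a↓ and F_j ⊆ b↓. -/
open Finset
open scoped Classical

noncomputable section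

variable {V : Type*} [Fintype V] [DecidableEq V]

/-!
Let `a` be the child of `z` on the tree path towards `x`. Every tree edge leaving the subtree
`a↓` other than the edge `za` ends in `z`, so a walk that starts in `a↓` and avoids `z` stays in
`a↓`. The fragment `F i` is connected in `T` and avoids `z`, hence lies in `a↓`; likewise
`F j ⊆ b↓` for the child `b` of `z` towards `y`. Finally `a ≠ b`, as otherwise `a` would be a
common ancestor of `x` and `y` deeper than `z`.
-/

namespace Desc

open SimpleGraph

variable {V : Type*} {T : SimpleGraph V} {r u v a : V}

theorem iff_mem_support (hT : T.IsAcyclic) {p : T.Walk r u} (hp : p.IsPath) :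
    Desc T r v u ↔ v ∈ p.support := by
  refine ⟨fun h => h p hp, fun h q hq => ?_⟩
  rwa [Subtype.mk.inj ((hT.subsingleton_path r u).elim ⟨q, hq⟩ ⟨p, hp⟩)]

theorem dist_lt (h : Desc T r v u) (hvu : v ≠ u) (hru : T.Reachable r u) :
    T.dist r v < T.dist r u := by
  obtain ⟨p, hp, hlen⟩ := hru.exists_path_of_dist
  have hv := h p hp
  calc T.dist r v ≤ (p.takeUntil v hv).length := dist_le _
    _ < p.length := p.length_takeUntil_lt_length hv hvu
    _ = T.dist r u := hlen

theorem exists_child (hT : T.IsAcyclic) (hru : T.Reachable r u) (h : Desc T r v u)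
    (hvu : v ≠ u) : ∃ a, T.Adj v a ∧ Desc T r v a ∧ Desc T r a u := by
  obtain ⟨p, hp, -⟩ := hru.exists_path_of_dist
  obtain ⟨p₀, p₁, -, -, rfl⟩ := hp.mem_support_iff_exists_append.mp (h p hp)
  cases p₁ with
  | nil => exact absurd rfl hvu
  | @cons _ a _ hva p₁ =>
    rw [← Walk.concat_append] at hp
    refine ⟨a, hva, (iff_mem_support hT hp.of_append_left).mpr ?_, (iff_mem_support hT hp).mpr ?_⟩
    · simp [Walk.support_concat]
    · simp [Walk.support_append, Walk.support_concat]

theorem of_adj (hT : T.IsAcyclic) (hva : T.Adj v a) (hv : Desc T r v a) {u w : V}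
    (h : Desc T r a u) (huw : T.Adj u w) (hwv : w ≠ v) : Desc T r a w := by
  intro q hq
  by_cases hu : u ∈ q.support
  · exact q.support_takeUntil_subset_support hu (h _ (hq.takeUntil hu))
  · have hq' := hq.concat hu huw.symm
    have hau := h _ hq'
    rw [Walk.support_concat, List.mem_append, List.mem_singleton] at hau
    refine hau.resolve_right ?_
    rintro rfl
    have hvw := hT.eq_penultimate_of_adj_end hq' hva.symm (hv _ hq')
    rw [Walk.penultimate_concat] at hvw
    exact hwv hvw.symm

theorem of_walk (hT : T.IsAcyclic) (hva : T.Adj v a) (hv : Desc T r v a) {u w : V}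
    (p : T.Walk u w) (hp : v ∉ p.support) (h : Desc T r a u) : Desc T r a w := by
  induction p with
  | nil => exact h
  | cons huw p ih =>
    rw [Walk.support_cons, List.mem_cons, not_or] at hp
    exact ih hp.2 (of_adj hT hva hv h huw fun e => hp.2 (e ▸ p.start_mem_support))

theorem subset_descSet (hT : T.IsAcyclic) (hva : T.Adj v a) (hv : Desc T r v a) {S : Set V}
    (hS : (T.induce S).Preconnected) (hvS : v ∉ S) {x : V} (hx : x ∈ S) (h : Desc T r a x) :
    S ⊆ descSet T r a := by
  intro u hu
  obtain ⟨p⟩ := hS ⟨x, hx⟩ ⟨u, hu⟩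
  refine of_walk hT hva hv (p.map (Embedding.induce S).toHom) ?_ h
  intro hvp
  obtain ⟨w, -, rfl⟩ := List.mem_map.mp (Walk.support_map _ p ▸ hvp)
  exact hvS w.2

end Desc

theorem stmt10_general (T : SimpleGraph V)
    (hT : T.IsTree)
    (r : V) (k : ℕ) (F : Fin k → Set V)
    (hconn : ∀ i, (T.induce (F i)).Connected)
    (x y z : V) (i j : Fin k) (hx : x ∈ F i) (hy : y ∈ F j)
    (hz : IsLCA T r z x y) (hznot : z ∉ F i ∪ F j) :
    ∃ a b, a ≠ b ∧ T.Adj z a ∧ T.Adj z b ∧ Desc T r z a ∧ Desc T r z b ∧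
      F i ⊆ descSet T r a ∧ F j ⊆ descSet T r b := by
  obtain ⟨hzx, hzy, hdeepest⟩ := hz
  rw [Set.mem_union, not_or] at hznot
  obtain ⟨a, hza, hdza, hdax⟩ := hzx.exists_child hT.isAcyclic (hT.connected r x)
    (ne_of_mem_of_not_mem hx hznot.1).symm
  obtain ⟨b, hzb, hdzb, hdby⟩ := hzy.exists_child hT.isAcyclic (hT.connected r y)
    (ne_of_mem_of_not_mem hy hznot.2).symm
  have hab : a ≠ b := by
    rintro rfl
    have := hdza.dist_lt hza.ne (hT.connected r a)
    have := hdeepest a hdax hdby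
    omega
  exact ⟨a, b, hab, hza, hzb, hdza, hdzb,
    Desc.subset_descSet hT.isAcyclic hza hdza (hconn i).preconnected hznot.1 hx hdax,
    Desc.subset_descSet hT.isAcyclic hzb hdzb (hconn j).preconnected hznot.2 hy hdby⟩

/-- for a fragment decomposition of the spanning tree `T`
rooted at `r`, if `x ∈ F i`, `y ∈ F j` with `i ≠ j` and `z = LCA(x, y)` lies in
neither `F i` nor `F j`, then `z` is a merging node: it has two distinct
children `a, b` with `F i ⊆ a↓` and `F j ⊆ b↓`. -/
theorem stmt10 (G T : SimpleGraph V) (hG : G.Connected)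
    (hT : T.IsTree) (hTG : T ≤ G)
    (r : V) (k : ℕ) (F : Fin k → Set V)
    (hne : ∀ i, (F i).Nonempty)
    (hdisj : ∀ i j, i ≠ j → Disjoint (F i) (F j))
    (hcover : (⋃ i, F i) = Set.univ)
    (hconn : ∀ i, (T.induce (F i)).Connected)
    (x y z : V) (i j : Fin k) (hij : i ≠ j) (hx : x ∈ F i) (hy : y ∈ F j)
    (hz : IsLCA T r z x y) (hznot : z ∉ F i ∪ F j) :
    ∃ a b, a ≠ b ∧ T.Adj z a ∧ T.Adj z b ∧ Desc T r z a ∧ Desc T r z b ∧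
      F i ⊆ descSet T r a ∧ F j ⊆ descSet T r b :=
  stmt10_general T hT r k F hconn x y z i j hx hy hz hznot

end
end

section
/- Let T be a spanning tree of a finite connected simple graph rooted at r, with its vertex set partitioned into fragments each inducing a connected subgraph of T. Let x ∈ F_i, y ∈ F_j with i ≠ j, and let z = LCA(x,y). If z ∈ F_i, then F_j ⊆ z↓, and moreover z is the lowest ancestor of x whose descendant set contains F_j: for every vertex u that is an ancestor of x with u ∈ z↓ and u ≠ z, we have F_j ⊄ u↓. -/
/-!
A walk that avoids `z` cannot leave `z↓`: stepping to a neighbour of a proper descendant of `z`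
keeps us in `z↓`. Walking inside the connected fragment `F j` from `y ∈ z↓` never meets
`z ∈ F i`, hence `F j ⊆ z↓`. A proper descendant `u` of `z` is strictly deeper than `z`, so if
`F j ⊆ u↓` then `u` would be a common ancestor of `x` and `y` deeper than their LCA.
-/

open Finset
open scoped Classical

noncomputable section

variable {V : Type*} [Fintype V] [DecidableEq V]

section

variable {V : Type*} {T : SimpleGraph V} {r z a b : V}

open SimpleGraph

theorem Desc.of_adj_s11 (h : Desc T r z a) (hza : z ≠ a) (hab : T.Adj a b) : Desc T r z b := by
  intro q hq
  by_cases ha : a ∈ q.support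
  · exact q.support_takeUntil_subset_support ha (h _ (hq.takeUntil ha))
  · have hz := h _ (hq.concat ha hab.symm)
    rw [Walk.support_concat, List.mem_append, List.mem_singleton] at hz
    exact hz.resolve_right hza

theorem Desc.of_walk_s11 (h : Desc T r z a) (q : T.Walk a b) (hzq : z ∉ q.support) :
    Desc T r z b := by
  induction q with
  | nil => exact h
  | cons hadj q ih =>
    rw [Walk.support_cons, List.mem_cons, not_or] at hzq
    exact ih (h.of_adj_s11 hzq.1 hadj) hzq.2

theorem Desc.dist_lt_s11 (h : Desc T r z a) (hza : z ≠ a) (hra : T.Reachable r a) :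
    T.dist r z < T.dist r a := by
  obtain ⟨p, hp, hlen⟩ := hra.exists_path_of_dist
  have hz := h p hp
  calc T.dist r z ≤ (p.takeUntil z hz).length := dist_le _
    _ < p.length := Walk.length_takeUntil_lt_length hz hza
    _ = T.dist r a := hlen

theorem subset_descSet_of_preconnected {S : Set V} (hS : (T.induce S).Preconnected)
    (hzS : z ∉ S) (ha : a ∈ S) (h : Desc T r z a) : S ⊆ descSet T r z := by
  intro b hb
  obtain ⟨q⟩ := hS ⟨a, ha⟩ ⟨b, hb⟩
  have hzq : z ∉ (q.map (Embedding.induce S).toHom).support := by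
    rw [Walk.support_map, List.mem_map]
    rintro ⟨c, -, rfl⟩
    exact hzS c.2
  exact h.of_walk_s11 _ hzq

theorem IsLCA.eq_of_desc {x y u : V} (hz : IsLCA T r z x y) (hux : Desc T r u x)
    (huy : Desc T r u y) (hzu : Desc T r z u) (hru : T.Reachable r u) : u = z := by
  by_contra huz
  exact (hz.2.2 u hux huy).not_gt (hzu.dist_lt_s11 (Ne.symm huz) hru)

end

theorem stmt11_general (T : SimpleGraph V)
    (hT : T.IsTree)
    (r : V) (k : ℕ) (F : Fin k → Set V)
    (hdisj : ∀ i j, i ≠ j → Disjoint (F i) (F j))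
    (hconn : ∀ i, (T.induce (F i)).Connected)
    (x y z : V) (i j : Fin k) (hij : i ≠ j) (hy : y ∈ F j)
    (hz : IsLCA T r z x y) (hzFi : z ∈ F i) :
    F j ⊆ descSet T r z ∧
      ∀ u, Desc T r u x → u ∈ descSet T r z → u ≠ z →
        ¬ F j ⊆ descSet T r u := by
  have hzFj : z ∉ F j := Set.disjoint_left.mp (hdisj i j hij) hzFi
  refine ⟨subset_descSet_of_preconnected (hconn j).preconnected hzFj hy hz.2.1, ?_⟩
  intro u hux hzu huz hFj
  exact huz (hz.eq_of_desc hux (hFj hy) hzu (hT.connected r u))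

/-- for a fragment decomposition of the spanning tree `T`
rooted at `r`, if `x ∈ F i`, `y ∈ F j` with `i ≠ j` and `z = LCA(x, y)` lies in
`F i`, then `F j ⊆ z↓` and `z` is the lowest ancestor of `x` whose descendant
set contains `F j`: every ancestor `u` of `x` with `u ∈ z↓`, `u ≠ z` has
`F j ⊄ u↓`. -/
theorem stmt11 (G T : SimpleGraph V) (hG : G.Connected)
    (hT : T.IsTree) (hTG : T ≤ G)
    (r : V) (k : ℕ) (F : Fin k → Set V)
    (hne : ∀ i, (F i).Nonempty)
    (hdisj : ∀ i j, i ≠ j → Disjoint (F i) (F j))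
    (hcover : (⋃ i, F i) = Set.univ)
    (hconn : ∀ i, (T.induce (F i)).Connected)
    (x y z : V) (i j : Fin k) (hij : i ≠ j) (hx : x ∈ F i) (hy : y ∈ F j)
    (hz : IsLCA T r z x y) (hzFi : z ∈ F i) :
    F j ⊆ descSet T r z ∧
      ∀ u, Desc T r u x → u ∈ descSet T r z → u ≠ z →
        ¬ F j ⊆ descSet T r u :=
  stmt11_general T hT r k F hdisj hconn x y z i j hij hy hz hzFi

end
end
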